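/- Let X be a nonempty compact metric space with metric d and let f : X → X be an arbitrary function (no continuity is assumed). Then X has a nonempty invariant, internally SC_d-transitive subset: there exists a nonempty S ⊆ X with f(S) ⊆ S such that for all x,y ∈ S and every ε > 0 there is a strong (ε,d)-chain from x to y all of whose points lie in S. -/

import Mathlib

/-!
Zorn's lemma and Cantor's intersection theorem give a minimal nonempty closed `f`-invariant set `S`.
For `x ∈ S`, the points reachable from `x` inside `S` by strong chains of arbitrarily small total
error form a closed set (a chain's endpoint can be moved at the cost of the distance it moves,
with no continuity of `f` needed), which is invariant and contains `f x`; by minimality it is `S`.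
-/

/-- `c 0, c 1, …, c n` is a strong `(ε,d)`-chain for `f` from `x` to `y`:
`n ≥ 1`, `c 0 = x`, `c n = y` and `∑_{i<n} d(f(c i), c (i+1)) < ε`. -/
def IsStrongChain {X : Type*} [MetricSpace X] (f : X → X) (ε : ℝ) (x y : X)
    (n : ℕ) (c : ℕ → X) : Prop :=
  1 ≤ n ∧ c 0 = x ∧ c n = y ∧
    ∑ i ∈ Finset.range n, dist (f (c i)) (c (i + 1)) < ε

theorem exists_minimal_nonempty_isClosed_mapsTo {X : Type*} [TopologicalSpace X] [CompactSpace X]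
    [Nonempty X] (f : X → X) :
    ∃ S : Set X, Minimal (fun S : Set X ↦ S.Nonempty ∧ IsClosed S ∧ Set.MapsTo f S S) S := by
  refine (zorn_superset_nonempty {S : Set X | S.Nonempty ∧ IsClosed S ∧ Set.MapsTo f S S}
    (fun C hC hchain hCne ↦ ?_) Set.univ
    ⟨Set.univ_nonempty, isClosed_univ, Set.mapsTo_univ f _⟩).imp fun _ ↦ And.right
  have : Nonempty C := hCne.to_subtype
  refine ⟨⋂₀ C, ⟨?_, isClosed_sInter fun U hU ↦ (hC hU).2.1,
    fun x hx U hU ↦ (hC hU).2.2 (hx U hU)⟩, fun U hU ↦ Set.sInter_subset_of_mem hU⟩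
  exact IsCompact.nonempty_sInter_of_directed_nonempty_isCompact_isClosed
    (IsChain.directedOn (r := (· ≥ ·)) hchain.symm)
    (fun U hU ↦ (hC hU).1) (fun U hU ↦ (hC hU).2.1.isCompact) (fun U hU ↦ (hC hU).2.1)

section StrongChain

variable {X : Type*} [MetricSpace X] {f : X → X} {ε δ : ℝ} {x y z : X} {n m : ℕ} {c d : ℕ → X}

theorem IsStrongChain.mono (hc : IsStrongChain f ε x y n c) (hεδ : ε ≤ δ) :
    IsStrongChain f δ x y n c :=
  ⟨hc.1, hc.2.1, hc.2.2.1, hc.2.2.2.trans_le hεδ⟩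

theorem isStrongChain_one (h : dist (f x) y < ε) :
    IsStrongChain f ε x y 1 (fun i ↦ if i = 0 then x else y) := by
  simpa [IsStrongChain] using h

theorem IsStrongChain.append (hc : IsStrongChain f ε x y n c) (hd : IsStrongChain f δ y z m d) :
    IsStrongChain f (ε + δ) x z (n + m) (fun i ↦ if i ≤ n then c i else d (i - n)) := by
  obtain ⟨hn, hc0, hcn, hcsum⟩ := hc
  obtain ⟨hm, hd0, hdm, hdsum⟩ := hd
  set g : ℕ → X := fun i ↦ if i ≤ n then c i else d (i - n)
  have hg_left : ∀ i ≤ n, g i = c i := fun i hi ↦ if_pos hi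
  have hg_right : ∀ i, g (n + i) = d i := by
    intro i
    rcases Nat.eq_zero_or_pos i with rfl | hi
    · simp [g, hcn, hd0]
    · simp [g, show ¬n + i ≤ n by omega]
  refine ⟨by omega, by simp [g, hc0], by simp [g, show ¬n + m ≤ n by omega, hdm], ?_⟩
  rw [Finset.sum_range_add]
  have hleft : ∑ i ∈ Finset.range n, dist (f (g i)) (g (i + 1)) =
      ∑ i ∈ Finset.range n, dist (f (c i)) (c (i + 1)) := by
    refine Finset.sum_congr rfl fun i hi ↦ ?_
    rw [Finset.mem_range] at hi
    rw [hg_left i hi.le, hg_left (i + 1) hi]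
  simp only [hleft, add_assoc, hg_right]
  linarith

theorem IsStrongChain.update_last (hc : IsStrongChain f ε x y n c) (z : X) :
    IsStrongChain f (ε + dist y z) x z n (Function.update c n z) := by
  obtain ⟨hn, hc0, hcn, hsum⟩ := hc
  obtain ⟨m, rfl⟩ : ∃ m, n = m + 1 := ⟨n - 1, by omega⟩
  refine ⟨hn, by simp [hc0], by simp, ?_⟩
  rw [Finset.sum_range_succ] at hsum ⊢
  have hinit : ∑ i ∈ Finset.range m, dist (f (Function.update c (m + 1) z i))
      (Function.update c (m + 1) z (i + 1)) = ∑ i ∈ Finset.range m, dist (f (c i)) (c (i + 1)) := by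
    refine Finset.sum_congr rfl fun i hi ↦ ?_
    rw [Finset.mem_range] at hi
    rw [Function.update_of_ne (by omega), Function.update_of_ne (by omega)]
  have hlast : dist (f (c m)) z ≤ dist (f (c m)) (c (m + 1)) + dist y z :=
    hcn ▸ dist_triangle _ _ _
  simp only [hinit, Function.update_of_ne (show m ≠ m + 1 by omega), Function.update_self]
  linarith

end StrongChain

section Reach

variable {X : Type*} [MetricSpace X] {f : X → X} {S : Set X} {x : X}

def strongChainReachIn (f : X → X) (S : Set X) (x : X) : Set X :=
  {z | ∀ ε : ℝ, 0 < ε → ∃ (n : ℕ) (c : ℕ → X), IsStrongChain f ε x z n c ∧ ∀ i ≤ n, c i ∈ S}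

theorem strongChainReachIn_subset : strongChainReachIn f S x ⊆ S := by
  intro z hz
  obtain ⟨n, c, ⟨-, -, hcn, -⟩, hcS⟩ := hz 1 one_pos
  exact hcn ▸ hcS n le_rfl

theorem apply_mem_strongChainReachIn (hx : x ∈ S) (hfx : f x ∈ S) :
    f x ∈ strongChainReachIn f S x := by
  refine fun ε hε ↦ ⟨1, _, isStrongChain_one (by simpa using hε), fun i _ ↦ ?_⟩
  split_ifs
  exacts [hx, hfx]

theorem mapsTo_strongChainReachIn (hS : Set.MapsTo f S S) :
    Set.MapsTo f (strongChainReachIn f S x) (strongChainReachIn f S x) := by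
  intro z hz ε hε
  obtain ⟨n, c, hc, hcS⟩ := hz (ε / 2) (half_pos hε)
  have hzS : z ∈ S := strongChainReachIn_subset hz
  have hstep : IsStrongChain f (ε / 2) z (f z) 1 _ := isStrongChain_one (by simpa using hε)
  refine ⟨n + 1, _, (hc.append hstep).mono (add_halves ε).le, fun i hi ↦ ?_⟩
  split_ifs with hin
  exacts [hcS i hin, hzS, hS hzS]

theorem isClosed_strongChainReachIn (hS : IsClosed S) : IsClosed (strongChainReachIn f S x) := by
  refine closure_subset_iff_isClosed.mp fun z hz ε hε ↦ ?_
  have hzS : z ∈ S := hS.closure_subset_iff.mpr strongChainReachIn_subset hz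
  obtain ⟨w, hw, hwz⟩ := Metric.mem_closure_iff.mp hz (ε / 2) (half_pos hε)
  obtain ⟨n, c, hc, hcS⟩ := hw (ε / 2) (half_pos hε)
  refine ⟨n, _, (hc.update_last z).mono ?_, fun i hi ↦ ?_⟩
  · rw [dist_comm] at hwz
    linarith
  · rcases eq_or_ne i n with rfl | hin
    · simpa using hzS
    · simpa [hin] using hcS i hi

end Reach

theorem exists_invariant_internally_strong_chain_transitive_subset
    {X : Type*} [MetricSpace X] [CompactSpace X] [Nonempty X] (f : X → X) :
    ∃ S : Set X, S.Nonempty ∧ Set.MapsTo f S S ∧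
      ∀ x ∈ S, ∀ y ∈ S, ∀ ε : ℝ, 0 < ε →
        ∃ (n : ℕ) (c : ℕ → X), IsStrongChain f ε x y n c ∧ ∀ i ≤ n, c i ∈ S := by
  obtain ⟨S, hS⟩ := exists_minimal_nonempty_isClosed_mapsTo f
  obtain ⟨hne, hclosed, hinv⟩ := hS.prop
  refine ⟨S, hne, hinv, fun x hx y hy ↦ ?_⟩
  have hreach : strongChainReachIn f S x = S :=
    hS.eq_of_subset ⟨⟨f x, apply_mem_strongChainReachIn hx (hinv hx)⟩,
      isClosed_strongChainReachIn hclosed, mapsTo_strongChainReachIn hinv⟩ strongChainReachIn_subset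
  rw [← hreach] at hy
  exact hy
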